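/- arXiv:2008.06418 — 6 statements merged into one kernel-verified Lean document; each statement's English description precedes it below -/
import Mathlib

section
/- Closed-form resolution of the ABHY constraints (planar-basis expansion): let V be a real vector space with quadratic form Q, let i, j be integers with 3 ≤ i and i + 2 ≤ j, and let p₂, p₃, …, p_{j−1} ∈ V all be null. Then Q(∑_{a=i}^{j−1} p_a) = Q(∑_{a=2}^{j−1} p_a) − Q(∑_{a=2}^{i} p_a) − ∑_{a=2}^{i−1} ∑_{b=i+1}^{j−1} Q(p_a + p_b). In planar-variable notation: X_{i,j} = X_{2,j} − X_{2,i+1} + ∑_{a=2}^{i−1} ∑_{b=i+1}^{j−1} c_{a,b}, where c_{a,b} = −Q(p_a + p_b), expressing every planar variable in the basis {X_{2,i}} used for the bi-adjoint recursion. -/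
/-!
Write `u, v, w` for the sums of `p` over `[2, i-1]`, `{i}`, `[i+1, j-1]`. For any quadratic map,
inclusion–exclusion through the middle vector gives
`Q (v + w) = Q (u + v + w) - Q (u + v) + Q v - polar Q u w`. Here `Q v = 0`, and by
bilinearity `polar Q u w` is the double sum of `polar Q (p a) (p b)`, each of which equals
`Q (p a + p b)` because `p a` and `p b` are null.
-/

open Finset

theorem Finset.sum_Icc_eq_sum_Icc_add_add_sum_Icc {M : Type*} [AddCommMonoid M] (f : ℕ → M)
    {a b c : ℕ} (hb : 0 < b) (hab : a ≤ b) (hbc : b ≤ c) :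
    ∑ x ∈ Icc a c, f x = ∑ x ∈ Icc a (b - 1), f x + f b + ∑ x ∈ Icc (b + 1) c, f x := by
  rw [← Ico_add_one_right_eq_Icc a c, ← Ico_add_one_right_eq_Icc a (b - 1),
    ← Ico_add_one_right_eq_Icc (b + 1) c, Nat.sub_one_add_one hb.ne',
    ← sum_Ico_consecutive f hab (by omega : b ≤ c + 1),
    sum_eq_sum_Ico_succ_bot (by omega : b < c + 1), add_assoc]

namespace QuadraticMap

variable {R M N : Type*} [CommRing R] [AddCommGroup M] [AddCommGroup N] [Module R M] [Module R N]

theorem polar_eq_map_add_add_sub (Q : QuadraticMap R M N) (u v w : M) :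
    polar Q u w = Q (u + v + w) - Q (u + v) - Q (v + w) + Q v := by
  have h := polar_add_right (Q := Q) u v w
  simp only [polar, ← add_assoc] at h
  rw [polar, ← sub_eq_zero, ← neg_eq_zero]
  rw [← sub_eq_zero] at h
  convert h using 1
  abel

theorem polar_sum_sum {ι κ : Type*} (Q : QuadraticMap R M N) (s : Finset ι) (t : Finset κ)
    (f : ι → M) (g : κ → M) :
    polar Q (∑ a ∈ s, f a) (∑ b ∈ t, g b) = ∑ a ∈ s, ∑ b ∈ t, polar Q (f a) (g b) := by
  simp only [← polarBilin_apply_apply, map_sum, LinearMap.sum_apply]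
  exact sum_comm

theorem map_add_eq_polar_of_map_eq_zero (Q : QuadraticMap R M N) {x y : M} (hx : Q x = 0)
    (hy : Q y = 0) : Q (x + y) = polar Q x y := by
  simp [polar, hx, hy]

end QuadraticMap

/-- Closed-form resolution of the ABHY constraints: for `3 ≤ i` and `i + 2 ≤ j`,
with `p 2, …, p (j-1)` null,
`Q(∑_{a=i}^{j-1} p a) = Q(∑_{a=2}^{j-1} p a) − Q(∑_{a=2}^{i} p a)
  − ∑_{a=2}^{i-1} ∑_{b=i+1}^{j-1} Q(p a + p b)`. -/
theorem abhy_closed_form (V : Type*) [AddCommGroup V] [Module ℝ V]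
    (Q : QuadraticForm ℝ V) (i j : ℕ) (hi : 3 ≤ i) (hj : i + 2 ≤ j)
    (p : ℕ → V) (hnull : ∀ a ∈ Finset.Icc 2 (j - 1), Q (p a) = 0) :
    Q (∑ a ∈ Finset.Icc i (j - 1), p a)
      = Q (∑ a ∈ Finset.Icc 2 (j - 1), p a) - Q (∑ a ∈ Finset.Icc 2 i, p a)
        - ∑ a ∈ Finset.Icc 2 (i - 1), ∑ b ∈ Finset.Icc (i + 1) (j - 1), Q (p a + p b) := by
  have hi0 : 0 < i := by omega
  set u := ∑ a ∈ Icc 2 (i - 1), p a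
  set w := ∑ b ∈ Icc (i + 1) (j - 1), p b
  have h_all : ∑ a ∈ Icc 2 (j - 1), p a = u + p i + w :=
    sum_Icc_eq_sum_Icc_add_add_sum_Icc p hi0 (by omega) (by omega)
  have h_left : ∑ a ∈ Icc 2 i, p a = u + p i := by
    rw [sum_Icc_eq_sum_Icc_add_add_sum_Icc p hi0 (by omega) le_rfl,
      Icc_eq_empty_of_lt (Nat.lt_succ_self i), sum_empty, add_zero]
  have h_right : ∑ a ∈ Icc i (j - 1), p a = p i + w := by
    rw [sum_Icc_eq_sum_Icc_add_add_sum_Icc p hi0 le_rfl (by omega),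
      Icc_eq_empty_of_lt (Nat.sub_lt hi0 one_pos), sum_empty, zero_add]
  have h_pairs : ∀ a ∈ Icc 2 (i - 1), ∀ b ∈ Icc (i + 1) (j - 1),
      Q (p a + p b) = QuadraticMap.polar Q (p a) (p b) := fun a ha b hb =>
    Q.map_add_eq_polar_of_map_eq_zero (hnull a (by simp only [mem_Icc] at ha ⊢; omega))
      (hnull b (by simp only [mem_Icc] at hb ⊢; omega))
  rw [h_all, h_left, h_right, sum_congr rfl fun a ha => sum_congr rfl (h_pairs a ha),
    ← Q.polar_sum_sum, Q.polar_eq_map_add_add_sub _ (p i), hnull i (mem_Icc.2 ⟨by omega, by omega⟩)]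
  abel
end

section
/- First adjacent-pair basis identity (Appendix C, eq. (C.2), first line): let V be a real vector space with quadratic form Q, let i, m be integers with 2 ≤ i < m, and let p₃, p₄, …, p_{2m} ∈ V all be null. Then Q(∑_{a=2i−1}^{2m} p_a) = −Q(∑_{a=3}^{2i} p_a) + Q(∑_{a=3}^{2m} p_a) + Q(p_{2i−1} + p_{2i}) + (2i−4)·∑_{k=i+1}^{m} Q(p_{2k−1} + p_{2k}) − ∑_{j=3}^{2i−2} ∑_{k=i+1}^{m} Q(p_j + p_{2k−1} + p_{2k}). In planar-variable notation: X_{2i−1,2m+1} = −X_{3,2i+1} + X_{3,2m+1} + X_{2i−1,2i+1} + (2i−4)∑_{k=i+1}^{m} X_{2k−1,2k+1} + ∑_{j=3}^{2i−2}∑_{k=i+1}^{m} c_{j,2k−1,2k}. -/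
/-!
Put `A = p₃ + ⋯ + p_{2i-2}`, `C = p_{2i-1} + p_{2i}` and `D = ∑_{k>i} P_k` with
`P_k = p_{2k-1} + p_{2k}`, and let `B` be the polar form. Because each `p_j` is null,
`Q(p_j + P_k) = Q(P_k) + B(p_j, P_k)`, so the double sum equals `(2i-4) ∑ Q(P_k) + B(A, D)`;
and `Q(A + C + D) - Q(A + C) = Q(D) + B(A, D) + B(C, D)`. The right-hand side therefore
collapses to `Q(C) + Q(D) + B(C, D) = Q(C + D)`.
-/

open Finset QuadraticMap

theorem Finset.sum_Ioc_two_mul {M : Type*} [AddCommMonoid M] (f : ℕ → M) {i m : ℕ} (h : i ≤ m) :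
    ∑ a ∈ Ioc (2 * i) (2 * m), f a = ∑ k ∈ Ioc i m, (f (2 * k - 1) + f (2 * k)) := by
  induction m, h using Nat.le_induction with
  | base => simp
  | succ m hm ih =>
    rw [sum_Ioc_succ_top hm, ← ih, show 2 * (m + 1) = 2 * m + 1 + 1 by ring,
      sum_Ioc_succ_top (by omega), sum_Ioc_succ_top (by omega), add_assoc]
    rfl

namespace QuadraticMap

variable {R M N ι κ : Type*} [CommRing R] [AddCommGroup M] [AddCommGroup N] [Module R M]
  [Module R N]

theorem sum_sum_map_add_of_isotropic (Q : QuadraticMap R M N) {s : Finset ι} {t : Finset κ}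
    {x : ι → M} (hx : ∀ j ∈ s, Q (x j) = 0) (y : κ → M) :
    ∑ j ∈ s, ∑ k ∈ t, Q (x j + y k)
      = #s • ∑ k ∈ t, Q (y k) + polar Q (∑ j ∈ s, x j) (∑ k ∈ t, y k) := by
  have hrow : ∀ j ∈ s, ∑ k ∈ t, Q (x j + y k)
      = ∑ k ∈ t, Q (y k) + polar Q (x j) (∑ k ∈ t, y k) := by
    intro j hj
    simp only [QuadraticMap.map_add, hx j hj, zero_add, sum_add_distrib, ← polarBilin_apply_apply,
      map_sum]
  simp only [sum_congr rfl hrow, sum_add_distrib, sum_const, ← polarBilin_apply_apply,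
    LinearMap.map_sum₂]

end QuadraticMap

/-- First adjacent-pair basis identity (Appendix C, eq. (C.2), first line):
for `2 ≤ i < m` and `p 3, …, p (2m)` null,
`Q(∑_{a=2i-1}^{2m} p a) = −Q(∑_{a=3}^{2i} p a) + Q(∑_{a=3}^{2m} p a)
  + Q(p_{2i-1} + p_{2i}) + (2i−4)·∑_{k=i+1}^{m} Q(p_{2k-1} + p_{2k})
  − ∑_{j=3}^{2i-2} ∑_{k=i+1}^{m} Q(p_j + p_{2k-1} + p_{2k})`. -/
theorem adjacent_pair_basis_first (V : Type*) [AddCommGroup V] [Module ℝ V]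
    (Q : QuadraticForm ℝ V) (i m : ℕ) (hi : 2 ≤ i) (him : i < m)
    (p : ℕ → V) (hnull : ∀ a ∈ Finset.Icc 3 (2 * m), Q (p a) = 0) :
    Q (∑ a ∈ Finset.Icc (2 * i - 1) (2 * m), p a)
      = -Q (∑ a ∈ Finset.Icc 3 (2 * i), p a) + Q (∑ a ∈ Finset.Icc 3 (2 * m), p a)
        + Q (p (2 * i - 1) + p (2 * i))
        + (2 * (i : ℝ) - 4) * ∑ k ∈ Finset.Icc (i + 1) m, Q (p (2 * k - 1) + p (2 * k))
        - ∑ j ∈ Finset.Icc 3 (2 * i - 2), ∑ k ∈ Finset.Icc (i + 1) m,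
            Q (p j + p (2 * k - 1) + p (2 * k)) := by
  have hIcc : ∀ n, Icc 3 n = Ioc 2 n := Icc_add_one_left_eq_Ioc 2
  set A := ∑ a ∈ Icc 3 (2 * i - 2), p a
  set C := p (2 * i - 1) + p (2 * i)
  set D := ∑ k ∈ Icc (i + 1) m, (p (2 * k - 1) + p (2 * k))
  have hC : ∑ a ∈ Ioc (2 * i - 2) (2 * i), p a = C := by
    rw [show Ioc (2 * i - 2) (2 * i) = {2 * i - 1, 2 * i} by
      ext; simp only [mem_Ioc, mem_insert, mem_singleton]; omega, sum_pair (by omega)]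
  have hD : ∑ a ∈ Ioc (2 * i) (2 * m), p a = D := by
    rw [sum_Ioc_two_mul p him.le, ← Icc_add_one_left_eq_Ioc]
  have hAC : ∑ a ∈ Icc 3 (2 * i), p a = A + C := by
    rw [← hC, hIcc, ← sum_Ioc_consecutive _ (by omega : 2 ≤ 2 * i - 2) (by omega), ← hIcc]
  have hACD : ∑ a ∈ Icc 3 (2 * m), p a = A + C + D := by
    rw [← hAC, ← hD, hIcc, hIcc, sum_Ioc_consecutive _ (by omega) (by omega)]
  have hCD : ∑ a ∈ Icc (2 * i - 1) (2 * m), p a = C + D := by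
    rw [← hC, ← hD, show 2 * i - 1 = 2 * i - 2 + 1 by omega, Icc_add_one_left_eq_Ioc,
      sum_Ioc_consecutive _ (by omega) (by omega)]
  have hcross : ∑ j ∈ Icc 3 (2 * i - 2), ∑ k ∈ Icc (i + 1) m, Q (p j + p (2 * k - 1) + p (2 * k))
      = (2 * (i : ℝ) - 4) * ∑ k ∈ Icc (i + 1) m, Q (p (2 * k - 1) + p (2 * k)) + polar Q A D := by
    have hcard : (#(Icc 3 (2 * i - 2)) : ℝ) = 2 * i - 4 := by
      rw [Nat.card_Icc, Nat.cast_sub (by omega)]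
      push_cast [Nat.cast_sub (by omega : 2 ≤ 2 * i)]
      ring
    simp_rw [add_assoc]
    rw [Q.sum_sum_map_add_of_isotropic fun j hj => hnull j (by simp only [mem_Icc] at hj ⊢; omega),
      nsmul_eq_mul, hcard]
  rw [hCD, hAC, hACD, hcross, QuadraticMap.map_add Q C D, QuadraticMap.map_add Q (A + C) D,
    polar_add_left Q A C D]
  ring
end

section
/- Second adjacent-pair basis identity (Appendix C, eq. (C.2), second line): let V be a real vector space with quadratic form Q, let i, m be integers with 2 ≤ i < m, and let p₃, p₄, …, p_{2m} ∈ V all be null. Then Q(∑_{a=2i−1}^{2m−1} p_a) = −Q(∑_{a=3}^{2i} p_a) + Q(∑_{a=3}^{2m} p_a) + 2·Q(p_{2i−1} + p_{2i}) + (2i−5)·Q(p_{2m−1} + p_{2m}) + (2i−3)·∑_{k=i+1}^{m−1} Q(p_{2k−1} + p_{2k}) − ∑_{j=3}^{2i−2} ∑_{k=i+1}^{m} Q(p_j + p_{2k−1} + p_{2k}) − ∑_{k=i}^{m−1} Q(p_{2k−1} + p_{2k} + p_{2m}). In planar-variable notation: X_{2i−1,2m} = −X_{3,2i+1} + X_{3,2m+1}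 + 2X_{2i−1,2i+1} + (2i−5)X_{2m−1,2m+1} + (2i−3)∑_{k=i+1}^{m−1} X_{2k−1,2k+1} + ∑_{j=3}^{2i−2}∑_{k=i+1}^{m} c_{j,2k−1,2k} + ∑_{k=i}^{m−1} c_{2k−1,2k,2m}. -/
/-!
With `P k = p (2k-1) + p (2k)` and `x = p 3 + ⋯ + p (2i-2)`, every term of the identity is
expanded by `Q (u + v) = Q u + Q v + polar Q u v`, dropping `Q` of every null summand. The pairings
`polar Q x (P k)` coming from `Q(p 3 + ⋯ + p (2m))` cancel against the three-particle terms
`Q (p j + P k)`, and the pairings `polar Q (P k) (p (2m))` against the terms `Q (P k + p (2m))`.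
What is left are the `Q (P k)`, whose coefficients cancel because `#{3, …, 2i-2} = 2i - 4`.
-/

open Finset QuadraticMap

namespace Finset

variable {M : Type*} [AddCommMonoid M]

theorem sum_Icc_consecutive (f : ℕ → M) {a b c : ℕ} (hab : a ≤ b + 1) (hbc : b ≤ c) :
    ∑ k ∈ Icc a b, f k + ∑ k ∈ Icc (b + 1) c, f k = ∑ k ∈ Icc a c, f k := by
  simp only [← Ico_add_one_right_eq_Icc]
  exact sum_Ico_consecutive f hab (by omega)

theorem sum_Icc_eq_add_sum_Icc_succ (f : ℕ → M) {a b : ℕ} (hab : a ≤ b) :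
    ∑ k ∈ Icc a b, f k = f a + ∑ k ∈ Icc (a + 1) b, f k := by
  rw [Icc_add_one_left_eq_Ioc, add_sum_Ioc_eq_sum_Icc hab]

theorem sum_Icc_eq_sum_pairs (f : ℕ → M) {i m : ℕ} (hi : 1 ≤ i) (him : i ≤ m) :
    ∑ a ∈ Icc (2 * i - 1) (2 * m), f a = ∑ k ∈ Icc i m, (f (2 * k - 1) + f (2 * k)) := by
  induction m, him using Nat.le_induction with
  | base =>
    rw [show Icc (2 * i - 1) (2 * i) = {2 * i - 1, 2 * i} by ext; simp; omega,
      sum_pair (by omega), Icc_self, sum_singleton]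
  | succ m _ ih =>
    rw [sum_Icc_succ_top (by omega), show 2 * (m + 1) = 2 * m + 1 + 1 by ring,
      sum_Icc_succ_top (by omega), sum_Icc_succ_top (by omega), ih, add_assoc,
      show 2 * m + 1 + 1 - 1 = 2 * m + 1 by omega]

theorem sum_Icc_eq_add_sum_pairs (f : ℕ → M) {a i m : ℕ} (ha : a ≤ 2 * i - 1) (hi : 1 ≤ i)
    (him : i ≤ m) :
    ∑ k ∈ Icc a (2 * m), f k
      = ∑ k ∈ Icc a (2 * i - 2), f k + ∑ k ∈ Icc i m, (f (2 * k - 1) + f (2 * k)) := by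
  rw [← sum_Icc_eq_sum_pairs f hi him, show 2 * i - 1 = 2 * i - 2 + 1 by omega,
    sum_Icc_consecutive f (by omega) (by omega)]

theorem sum_Icc_eq_sum_pairs_add (f : ℕ → M) {i m : ℕ} (hi : 1 ≤ i) (him : i < m) :
    ∑ a ∈ Icc (2 * i - 1) (2 * m - 1), f a
      = ∑ k ∈ Icc i (m - 1), (f (2 * k - 1) + f (2 * k)) + f (2 * m - 1) := by
  obtain ⟨n, rfl⟩ : ∃ n, m = n + 1 := ⟨m - 1, by omega⟩
  rw [show 2 * (n + 1) - 1 = 2 * n + 1 by omega, Nat.add_sub_cancel, sum_Icc_succ_top (by omega),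
    sum_Icc_eq_sum_pairs f hi (by omega)]

end Finset

namespace QuadraticMap

variable {R M N : Type*} [CommRing R] [AddCommGroup M] [AddCommGroup N] [Module R M]
  [Module R N] (Q : QuadraticMap R M N)

theorem polar_sum_left {ι : Type*} (s : Finset ι) (f : ι → M) (y : M) :
    polar Q (∑ i ∈ s, f i) y = ∑ i ∈ s, polar Q (f i) y := by
  simp only [← polarBilin_apply_apply, map_sum, LinearMap.sum_apply]

theorem polar_sum_right {ι : Type*} (s : Finset ι) (x : M) (f : ι → M) :
    polar Q x (∑ i ∈ s, f i) = ∑ i ∈ s, polar Q x (f i) := by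
  simp only [← polarBilin_apply_apply, map_sum]

theorem sum_map_add_of_map_eq_zero_left {x : M} (hx : Q x = 0) {ι : Type*} (s : Finset ι)
    (f : ι → M) : ∑ k ∈ s, Q (x + f k) = ∑ k ∈ s, Q (f k) + polar Q x (∑ k ∈ s, f k) := by
  simp only [QuadraticMap.map_add, hx, zero_add, sum_add_distrib, polar_sum_right]

theorem sum_map_add_of_map_eq_zero_right {z : M} (hz : Q z = 0) {ι : Type*} (s : Finset ι)
    (f : ι → M) : ∑ k ∈ s, Q (f k + z) = ∑ k ∈ s, Q (f k) + polar Q (∑ k ∈ s, f k) z := by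
  simp only [QuadraticMap.map_add, hz, add_zero, sum_add_distrib, polar_sum_left]

theorem sum_sum_map_add_of_map_eq_zero_left {ι κ : Type*} {s : Finset ι} {u : ι → M}
    (hu : ∀ j ∈ s, Q (u j) = 0) (t : Finset κ) (v : κ → M) :
    ∑ j ∈ s, ∑ k ∈ t, Q (u j + v k)
      = #s • ∑ k ∈ t, Q (v k) + polar Q (∑ j ∈ s, u j) (∑ k ∈ t, v k) := by
  rw [sum_congr rfl fun j hj ↦ sum_map_add_of_map_eq_zero_left Q (hu j hj) t v,
    sum_add_distrib, sum_const, polar_sum_left]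

end QuadraticMap

/-- `∑ j ∈ s, u j`, `P k` and `w + z` stand for `p 3 + ⋯ + p (2i-2)`, `p (2k-1) + p (2k)` and
`p (2m-1) + p (2m)`, where `m = n + 1`. -/
theorem QuadraticForm.adjacent_pair_identity {R V : Type*} [CommRing R] [AddCommGroup V]
    [Module R V] (Q : QuadraticForm R V) {s : Finset ℕ} {u : ℕ → V} (hu : ∀ j ∈ s, Q (u j) = 0)
    (P : ℕ → V) {i n : ℕ} (hin : i ≤ n) {w z : V} (hw : Q w = 0) (hz : Q z = 0)
    (hP : P (n + 1) = w + z) :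
    Q (∑ k ∈ Icc i n, P k + w)
      = -Q (∑ j ∈ s, u j + P i) + Q (∑ j ∈ s, u j + ∑ k ∈ Icc i (n + 1), P k)
        + 2 * Q (P i) + (#s - 1) * Q (P (n + 1)) + (#s + 1) * ∑ k ∈ Icc (i + 1) n, Q (P k)
        - ∑ j ∈ s, ∑ k ∈ Icc (i + 1) (n + 1), Q (u j + P k)
        - ∑ k ∈ Icc i n, Q (P k + z) := by
  set x := ∑ j ∈ s, u j
  set y := ∑ k ∈ Icc i n, P k
  set W := ∑ k ∈ Icc (i + 1) (n + 1), P k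
  set S := ∑ k ∈ Icc (i + 1) n, Q (P k)
  have hsum : ∑ k ∈ Icc i (n + 1), P k = P i + W := sum_Icc_eq_add_sum_Icc_succ P (by omega)
  have hPi_add_W : P i + W = y + w + z := by
    rw [← hsum, sum_Icc_succ_top (by omega), hP, add_assoc]
  have hPn : Q (P (n + 1)) = polar Q w z := by
    rw [hP, QuadraticMap.map_add Q, hw, hz, zero_add, zero_add]
  have hQW : ∑ k ∈ Icc (i + 1) (n + 1), Q (P k) = S + Q (P (n + 1)) :=
    sum_Icc_succ_top (by omega) _
  have hQy : ∑ k ∈ Icc i n, Q (P k) = Q (P i) + S := sum_Icc_eq_add_sum_Icc_succ _ hin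
  have h_mixed : ∑ j ∈ s, ∑ k ∈ Icc (i + 1) (n + 1), Q (u j + P k)
      = #s * (S + Q (P (n + 1))) + polar Q x W := by
    rw [sum_sum_map_add_of_map_eq_zero_left Q hu, hQW, nsmul_eq_mul]
  have h_last : ∑ k ∈ Icc i n, Q (P k + z) = Q (P i) + S + polar Q y z := by
    rw [sum_map_add_of_map_eq_zero_right Q hz, hQy]
  have h_total : Q (x + ∑ k ∈ Icc i (n + 1), P k)
      = Q x + Q y + polar Q y w + polar Q y z + Q (P (n + 1)) + polar Q x (P i) + polar Q x W := by
    rw [QuadraticMap.map_add Q x, hsum, polar_add_right, hPi_add_W, QuadraticMap.map_add Q (y + w),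
      QuadraticMap.map_add Q y, hw, hz, polar_add_left, hPn]
    ring
  rw [QuadraticMap.map_add Q y, hw, QuadraticMap.map_add Q x (P i), h_total, h_mixed, h_last]
  ring

/-- Second adjacent-pair basis identity (Appendix C, eq. (C.2), second line):
for `2 ≤ i < m` and `p 3, …, p (2m)` null,
`Q(∑_{a=2i-1}^{2m-1} p a) = −Q(∑_{a=3}^{2i} p a) + Q(∑_{a=3}^{2m} p a)
  + 2·Q(p_{2i-1} + p_{2i}) + (2i−5)·Q(p_{2m-1} + p_{2m})
  + (2i−3)·∑_{k=i+1}^{m-1} Q(p_{2k-1} + p_{2k})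
  − ∑_{j=3}^{2i-2} ∑_{k=i+1}^{m} Q(p_j + p_{2k-1} + p_{2k})
  − ∑_{k=i}^{m-1} Q(p_{2k-1} + p_{2k} + p_{2m})`. -/
theorem adjacent_pair_basis_second (V : Type*) [AddCommGroup V] [Module ℝ V]
    (Q : QuadraticForm ℝ V) (i m : ℕ) (hi : 2 ≤ i) (him : i < m)
    (p : ℕ → V) (hnull : ∀ a ∈ Finset.Icc 3 (2 * m), Q (p a) = 0) :
    Q (∑ a ∈ Finset.Icc (2 * i - 1) (2 * m - 1), p a)
      = -Q (∑ a ∈ Finset.Icc 3 (2 * i), p a) + Q (∑ a ∈ Finset.Icc 3 (2 * m), p a)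
        + 2 * Q (p (2 * i - 1) + p (2 * i))
        + (2 * (i : ℝ) - 5) * Q (p (2 * m - 1) + p (2 * m))
        + (2 * (i : ℝ) - 3) * ∑ k ∈ Finset.Icc (i + 1) (m - 1),
            Q (p (2 * k - 1) + p (2 * k))
        - ∑ j ∈ Finset.Icc 3 (2 * i - 2), ∑ k ∈ Finset.Icc (i + 1) m,
            Q (p j + p (2 * k - 1) + p (2 * k))
        - ∑ k ∈ Finset.Icc i (m - 1), Q (p (2 * k - 1) + p (2 * k) + p (2 * m)) := by
  obtain ⟨n, rfl⟩ : ∃ n, m = n + 1 := ⟨m - 1, by omega⟩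
  obtain ⟨P, hP⟩ : ∃ P : ℕ → V, ∀ k, p (2 * k - 1) + p (2 * k) = P k := ⟨_, fun _ ↦ rfl⟩
  have hcard : ((#(Icc 3 (2 * i - 2)) : ℕ) : ℝ) = 2 * i - 4 := by
    rw [Nat.card_Icc, show 2 * i - 2 + 1 - 3 = 2 * i - 4 by omega, Nat.cast_sub (by omega)]
    push_cast; ring
  have hnull_left : ∀ j ∈ Icc 3 (2 * i - 2), Q (p j) = 0 := fun j hj ↦
    hnull j (Icc_subset_Icc_right (by omega) hj)
  rw [sum_Icc_eq_sum_pairs_add p (by omega) him,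
    sum_Icc_eq_add_sum_pairs p (m := i) (by omega) (by omega) le_rfl, Icc_self, sum_singleton,
    sum_Icc_eq_add_sum_pairs p (by omega) (by omega) him.le]
  simp only [hP, add_assoc (p _), Nat.add_sub_cancel]
  rw [QuadraticForm.adjacent_pair_identity Q hnull_left P (by omega)
    (hnull _ (mem_Icc.2 ⟨by omega, by omega⟩)) (hnull _ (mem_Icc.2 ⟨by omega, le_rfl⟩)) (hP _).symm, hcard]
  ring
end

section
/- Third adjacent-pair basis identity (Appendix C, eq. (C.2), third line): let V be a real vector space with quadratic form Q, let i, m be integers with 2 ≤ i < m, and let p₃, p₄, …, p_{2m} ∈ V all be null. Then Q(∑_{a=2i}^{2m} p_a) = −Q(∑_{a=3}^{2i} p_a) + Q(∑_{a=3}^{2m} p_a) + (2i−3)·∑_{k=i+1}^{m} Q(p_{2k−1} + p_{2k}) − ∑_{j=3}^{2i−1} ∑_{k=i+1}^{m} Q(p_j + p_{2k−1} + p_{2k}). In planar-variable notation: X_{2i,2m+1} = −X_{3,2i+1} + X_{3,2m+1} + (2i−3)∑_{k=i+1}^{m} X_{2k−1,2k+1} + ∑_{j=3}^{2i−1}∑_{k=i+1}^{m}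 c_{j,2k−1,2k}. -/
/-!
Put `A = p₃ + ⋯ + p_{2i-1}`, `x = p_{2i}` and `R = ∑ₖ (p_{2k-1} + p_{2k})`, so that the three
sums on the left are `x + R`, `A + x` and `A + (x + R)`. Since `x` is null,
`Q(A + (x + R)) - Q(A + x) = Q(x + R) + B(A, R)`; since every `p_j` with `j < 2i` is null,
`∑_{j,k} Q(p_j + p_{2k-1} + p_{2k}) = (2i - 3) ∑ₖ Q(p_{2k-1} + p_{2k}) + B(A, R)`.
The cross term `B(A, R)` cancels between the two.
-/

open Finset QuadraticMap

section IntervalSums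

variable {M : Type*} [AddCommMonoid M]

theorem Finset.sum_Icc_consecutive_s6 (f : ℕ → M) {a b c : ℕ} (hab : a ≤ b + 1)
    (hbc : b ≤ c) :
    ∑ x ∈ Icc a b, f x + ∑ x ∈ Icc (b + 1) c, f x = ∑ x ∈ Icc a c, f x := by
  simp only [← Ico_add_one_right_eq_Icc]
  exact sum_Ico_consecutive f hab (by omega)

theorem Finset.sum_Icc_two_mul_add_one_eq_sum_pairs (f : ℕ → M) {i m : ℕ} (him : i ≤ m) :
    ∑ a ∈ Icc (2 * i + 1) (2 * m), f a
      = ∑ k ∈ Icc (i + 1) m, (f (2 * k - 1) + f (2 * k)) := by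
  induction m, him using Nat.le_induction with
  | base => simp
  | succ m him ih =>
    rw [sum_Icc_succ_top (by omega : i + 1 ≤ m + 1), ← ih,
      show 2 * (m + 1) = 2 * m + 1 + 1 by ring, sum_Icc_succ_top (by omega),
      sum_Icc_succ_top (by omega), add_assoc]
    rfl

end IntervalSums

section QuadraticMap

variable {R M N : Type*} [CommRing R] [AddCommGroup M] [AddCommGroup N] [Module R M] [Module R N]
  (Q : QuadraticMap R M N)

theorem QuadraticMap.polar_sum_sum_s6 {ι κ : Type*} (s : Finset ι) (t : Finset κ) (v : ι → M)
    (w : κ → M) :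
    polar Q (∑ j ∈ s, v j) (∑ k ∈ t, w k) = ∑ j ∈ s, ∑ k ∈ t, polar Q (v j) (w k) := by
  simp only [← polarBilin_apply_apply, map_sum, LinearMap.sum_apply]
  exact sum_comm

theorem QuadraticMap.sum_sum_map_add_of_map_eq_zero {ι κ : Type*} (s : Finset ι) (t : Finset κ)
    (v : ι → M) (w : κ → M) (hv : ∀ j ∈ s, Q (v j) = 0) :
    ∑ j ∈ s, ∑ k ∈ t, Q (v j + w k)
      = #s • ∑ k ∈ t, Q (w k) + polar Q (∑ j ∈ s, v j) (∑ k ∈ t, w k) := by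
  rw [polar_sum_sum_s6, ← sum_const, ← sum_add_distrib]
  refine sum_congr rfl fun j hj => ?_
  simp only [QuadraticMap.map_add Q, hv j hj, zero_add, sum_add_distrib]

theorem QuadraticMap.map_add_add_sub_map_add_of_map_eq_zero {x : M} (hx : Q x = 0) (a r : M) :
    Q (a + (x + r)) - Q (a + x) = Q (x + r) + polar Q a r := by
  simp only [QuadraticMap.map_add Q a, polar_add_right, QuadraticMap.map_add Q x r, hx]
  abel

end QuadraticMap

/-- Third adjacent-pair basis identity (Appendix C, eq. (C.2), third line):
for `2 ≤ i < m` and `p 3, …, p (2m)` null,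
`Q(∑_{a=2i}^{2m} p a) = −Q(∑_{a=3}^{2i} p a) + Q(∑_{a=3}^{2m} p a)
  + (2i−3)·∑_{k=i+1}^{m} Q(p_{2k-1} + p_{2k})
  − ∑_{j=3}^{2i-1} ∑_{k=i+1}^{m} Q(p_j + p_{2k-1} + p_{2k})`. -/
theorem adjacent_pair_basis_third (V : Type*) [AddCommGroup V] [Module ℝ V]
    (Q : QuadraticForm ℝ V) (i m : ℕ) (hi : 2 ≤ i) (him : i < m)
    (p : ℕ → V) (hnull : ∀ a ∈ Finset.Icc 3 (2 * m), Q (p a) = 0) :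
    Q (∑ a ∈ Finset.Icc (2 * i) (2 * m), p a)
      = -Q (∑ a ∈ Finset.Icc 3 (2 * i), p a) + Q (∑ a ∈ Finset.Icc 3 (2 * m), p a)
        + (2 * (i : ℝ) - 3) * ∑ k ∈ Finset.Icc (i + 1) m, Q (p (2 * k - 1) + p (2 * k))
        - ∑ j ∈ Finset.Icc 3 (2 * i - 1), ∑ k ∈ Finset.Icc (i + 1) m,
            Q (p j + p (2 * k - 1) + p (2 * k)) := by
  set A := ∑ a ∈ Icc 3 (2 * i - 1), p a
  set R := ∑ k ∈ Icc (i + 1) m, (p (2 * k - 1) + p (2 * k)) with hR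
  have hsplit (c : ℕ) (hc : 2 * i - 1 ≤ c) :
      ∑ a ∈ Icc 3 c, p a = A + ∑ a ∈ Icc (2 * i) c, p a := by
    rw [← sum_Icc_consecutive_s6 p (by omega) hc, Nat.sub_add_cancel (by omega)]
  have htail : ∑ a ∈ Icc (2 * i) (2 * m), p a = p (2 * i) + R := by
    rw [hR, ← sum_Icc_two_mul_add_one_eq_sum_pairs p him.le,
      ← sum_Icc_consecutive_s6 p (a := 2 * i) (b := 2 * i) (by omega) (by omega), Icc_self,
      sum_singleton]
  have hcross :
      ∑ j ∈ Icc 3 (2 * i - 1), ∑ k ∈ Icc (i + 1) m, Q (p j + p (2 * k - 1) + p (2 * k))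
        = (2 * (i : ℝ) - 3) * ∑ k ∈ Icc (i + 1) m, Q (p (2 * k - 1) + p (2 * k))
          + polar Q A R := by
    simp only [add_assoc]
    rw [sum_sum_map_add_of_map_eq_zero Q _ _ _ _ fun j hj => hnull j (by simp at hj ⊢; omega),
      Nat.card_Icc, nsmul_eq_mul, Nat.cast_sub (by omega)]
    push_cast [Nat.sub_add_cancel (by omega : 1 ≤ 2 * i)]
    ring
  have hx : Q (p (2 * i)) = 0 := hnull _ (by simp; omega)
  have hdiff := map_add_add_sub_map_add_of_map_eq_zero Q hx A R
  rw [hsplit (2 * m) (by omega), hsplit (2 * i) (by omega), Icc_self, sum_singleton, htail, hcross]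
  linarith
end

section
/- Fourth adjacent-pair basis identity (Appendix C, eq. (C.2), fourth line, with summation range k = m+1, …, r): let V be a real vector space with quadratic form Q, let r ≥ 3 and n = 2r, let p₁, …, p_n ∈ V all be null with total momentum zero (∑_{a=1}^{n} p_a = 0), and let m be an integer with 2 ≤ m ≤ r−1. Then Q(∑_{a=2}^{2m} p_a) = −Q(p₁ + p₂) + Q(∑_{a=3}^{2m} p_a) + ∑_{k=m+1}^{r} Q(p_{2k−1} + p_{2k}) − ∑_{k=m+1}^{r} Q(p₂ + p_{2k−1} + p_{2k}). In planar-variable notation: X_{2,2m+1} = −X_{1,3} + X_{3,2m+1} + ∑_{k=m+1}^{n/2} X_{2k−1,2k+1} + ∑_{k=m+1}^{n/2} c_{2,2k−1,2k}. -/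
/-!
Write `S = p₃ + ⋯ + p_{2m}` and `T = p_{2m+1} + ⋯ + p_{2r}`, so that `p₁ + p₂ + S + T = 0`.
For a null vector `x`, `Q (x + y) = Q y + polar Q x y`, so the two sums over `k` differ by
`polar Q p₂ T`, and momentum conservation turns this into `-polar Q p₂ (p₁ + p₂ + S)`,
which is exactly what is needed since `Q (p₁ + p₂) = polar Q p₁ p₂` and `polar Q p₂ p₂ = 0`.
-/

open Finset QuadraticMap

section Null

variable {R M N : Type*} [CommRing R] [AddCommGroup M] [Module R M] [AddCommGroup N] [Module R N]
  (Q : QuadraticMap R M N) {x : M}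

theorem QuadraticMap.map_add_of_null (hx : Q x = 0) (y : M) : Q (x + y) = Q y + polar Q x y := by
  rw [polar, hx]
  abel

theorem QuadraticMap.sum_map_add_of_null {ι : Type*} (hx : Q x = 0) (s : Finset ι) (y : ι → M) :
    ∑ i ∈ s, Q (x + y i) = ∑ i ∈ s, Q (y i) + polar Q x (∑ i ∈ s, y i) := by
  simp only [Q.map_add_of_null hx, sum_add_distrib, ← polarBilin_apply_apply, map_sum]

theorem QuadraticMap.map_add_of_null_of_add_eq_zero {u S T : M} (hu : Q u = 0) (hx : Q x = 0)
    (h : u + x + S + T = 0) : Q (x + S) = -Q (u + x) + Q S - polar Q x T := by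
  have hT : T = -(u + x + S) := eq_neg_of_add_eq_zero_right h
  have hxx : polar Q x x = 0 := by rw [polar_self, hx, smul_zero]
  rw [hT, polar_neg_right, polar_add_right, polar_add_right, hxx, polar_comm Q x u,
    Q.map_add_of_null hu, Q.map_add_of_null hx, hx]
  abel

end Null

section Intervals

variable {M : Type*} [AddCommMonoid M] (f : ℕ → M) {m r : ℕ}

theorem Finset.sum_Ioc_pairs (hmr : m ≤ r) :
    ∑ k ∈ Ioc m r, (f (2 * k - 1) + f (2 * k)) = ∑ a ∈ Ioc (2 * m) (2 * r), f a := by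
  induction r, hmr using Nat.le_induction with
  | base => simp
  | succ r hmr ih =>
    rw [sum_Ioc_succ_top hmr, ih, show 2 * (r + 1) - 1 = 2 * r + 1 by omega,
      show 2 * (r + 1) = 2 * r + 1 + 1 by ring, sum_Ioc_succ_top (by omega),
      sum_Ioc_succ_top (by omega), add_assoc _ (f _)]

theorem Finset.sum_Icc_one_two_mul_eq (hm : 1 ≤ m) (hmr : m ≤ r) :
    ∑ a ∈ Icc 1 (2 * r), f a
      = f 1 + f 2 + ∑ a ∈ Icc 3 (2 * m), f a + ∑ a ∈ Icc (2 * m + 1) (2 * r), f a := by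
  have hIoc (a b : ℕ) : Icc (a + 1) b = Ioc a b := Icc_add_one_left_eq_Ioc a b
  rw [hIoc 0, hIoc 2, hIoc, ← sum_Ioc_consecutive f (by omega : 0 ≤ 2 * m) (by omega : 2 * m ≤ 2 * r),
    ← sum_Ioc_consecutive f (by omega : 0 ≤ 2) (by omega : 2 ≤ 2 * m)]
  simp [sum_Ioc_succ_top]

end Intervals

theorem adjacent_pair_basis_fourth_general (V : Type*) [AddCommGroup V] [Module ℝ V]
    (Q : QuadraticForm ℝ V) (r : ℕ)
    (p : ℕ → V) (hnull : ∀ a ∈ Finset.Icc 1 (2 * r), Q (p a) = 0)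
    (hmom : ∑ a ∈ Finset.Icc 1 (2 * r), p a = 0)
    (m : ℕ) (hm : 2 ≤ m) (hmr : m ≤ r - 1) :
    Q (∑ a ∈ Finset.Icc 2 (2 * m), p a)
      = -Q (p 1 + p 2) + Q (∑ a ∈ Finset.Icc 3 (2 * m), p a)
        + ∑ k ∈ Finset.Icc (m + 1) r, Q (p (2 * k - 1) + p (2 * k))
        - ∑ k ∈ Finset.Icc (m + 1) r, Q (p 2 + p (2 * k - 1) + p (2 * k)) := by
  have hp₁ : Q (p 1) = 0 := hnull 1 (by simp; omega)
  have hp₂ : Q (p 2) = 0 := hnull 2 (by simp; omega)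
  have hlhs : ∑ a ∈ Icc 2 (2 * m), p a = p 2 + ∑ a ∈ Icc 3 (2 * m), p a := by
    rw [← insert_Icc_add_one_left_eq_Icc (by omega : 2 ≤ 2 * m), sum_insert (by simp)]
    rfl
  have hpairs : ∑ k ∈ Icc (m + 1) r, (p (2 * k - 1) + p (2 * k))
      = ∑ a ∈ Icc (2 * m + 1) (2 * r), p a := by
    rw [Icc_add_one_left_eq_Ioc, Icc_add_one_left_eq_Ioc, sum_Ioc_pairs p (by omega)]
  have hsplit := sum_Icc_one_two_mul_eq p (by omega : 1 ≤ m) (by omega : m ≤ r)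
  rw [hmom, eq_comm] at hsplit
  simp_rw [add_assoc (p 2)]
  rw [hlhs, Q.sum_map_add_of_null hp₂, hpairs, Q.map_add_of_null_of_add_eq_zero hp₁ hp₂ hsplit]
  ring

/-- Fourth adjacent-pair basis identity (Appendix C, eq. (C.2), fourth line):
for `r ≥ 3`, `n = 2r`, momenta `p 1, …, p n` null with vanishing total momentum,
and `2 ≤ m ≤ r − 1`,
`Q(∑_{a=2}^{2m} p a) = −Q(p 1 + p 2) + Q(∑_{a=3}^{2m} p a)
  + ∑_{k=m+1}^{r} Q(p_{2k-1} + p_{2k}) − ∑_{k=m+1}^{r} Q(p 2 + p_{2k-1} + p_{2k})`. -/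
theorem adjacent_pair_basis_fourth (V : Type*) [AddCommGroup V] [Module ℝ V]
    (Q : QuadraticForm ℝ V) (r : ℕ) (hr : 3 ≤ r)
    (p : ℕ → V) (hnull : ∀ a ∈ Finset.Icc 1 (2 * r), Q (p a) = 0)
    (hmom : ∑ a ∈ Finset.Icc 1 (2 * r), p a = 0)
    (m : ℕ) (hm : 2 ≤ m) (hmr : m ≤ r - 1) :
    Q (∑ a ∈ Finset.Icc 2 (2 * m), p a)
      = -Q (p 1 + p 2) + Q (∑ a ∈ Finset.Icc 3 (2 * m), p a)
        + ∑ k ∈ Finset.Icc (m + 1) r, Q (p (2 * k - 1) + p (2 * k))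
        - ∑ k ∈ Finset.Icc (m + 1) r, Q (p 2 + p (2 * k - 1) + p (2 * k)) :=
  adjacent_pair_basis_fourth_general V Q r p hnull hmom m hm hmr
end

section
/- Eight-point open-associahedron recursion identity for A₈[(1,2),(3,4),(5,(6,7),8)]: for all nonzero real numbers X₁₃, X₁₄, X₁₅, X₁₆, X₂₅, X₃₅, X₃₆, X₃₈, X₅₈, X₆₈ with X₃₅ − X₂₅ ≠ 0, X₃₅ − X₃₈ ≠ 0, X₃₆ − 2X₃₈ ≠ 0, X₃₅ − X₃₆/2 ≠ 0, and X₃₈ − X₃₆/2 ≠ 0, one has (1/X₂₅ − 1/X₃₅)·(1/(X₁₅·X₆₈))·(1/X₁₆ + 1/X₅₈)·(1/(X₃₅ − X₂₅)) + (1/X₃₈ − 1/X₃₅)·(1/(X₁₃·(X₃₅ − X₃₈)·X₆₈))·(1/X₅₈ + 1/(X₃₆ − 2X₃₈)) + (1/X₃₆ − 1/(2X₃₅))·(1/((X₃₅ − X₃₆/2)·X₁₃·X₆₈))·(1/(X₃₈ − X₃₆/2) + 1/X₁₆) + (1/X₁₄ + 1/X₃₅)·(1/(X₁₃·X₆₈·X₁₅))·(1/X₅₈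 + 1/X₁₆) = 1/(X₁₃X₁₄X₁₅X₁₆X₆₈) + 1/(X₁₃X₁₅X₁₆X₃₅X₆₈) + 1/(X₁₅X₁₆X₂₅X₃₅X₆₈) + 1/(X₁₃X₁₆X₃₅X₃₆X₆₈) + 1/(X₁₃X₃₅X₃₆X₃₈X₆₈) + 1/(X₁₃X₁₄X₁₅X₅₈X₆₈) + 1/(X₁₃X₁₅X₃₅X₅₈X₆₈) + 1/(X₁₅X₂₅X₃₅X₅₈X₆₈) + 1/(X₁₃X₃₅X₃₈X₅₈X₆₈), i.e. the recursion with shift X₃₅ → zX₃₅, deformed channels F = {X₂₅, X₃₈, X₃₆, X₁₄} and prefactors λ = {1, 1, 2, −1} reproduces the nine flavor-allowed planar Feynman diagrams. -/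
/-!
In the channels `X₂₅, X₃₈, X₃₆` the residue factor collapses: with prefactor `λ`,
`(1/X_F - 1/(λ X₃₅)) / (X₃₅ - X_F/λ) = 1/(X_F X₃₅)`. This turns every channel contribution
into a sum of Feynman diagrams, except for the two terms with the spurious pole `X₃₆ = 2 X₃₈`
coming from the channels `X₃₈` and `X₃₆`; these add up to the diagram `1/(X₃₆ X₃₈)` by
partial fractions. What remains is a polynomial identity in the inverses of the variables.
-/

lemma inv_sub_inv_mul_inv_sub_div {K : Type*} [Field K] {a b : K} (c : K)
    (ha : a ≠ 0) (hb : b ≠ 0) (h : b - a / c ≠ 0) :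
    (a⁻¹ - (c * b)⁻¹) * (b - a / c)⁻¹ = (a * b)⁻¹ := by
  rcases eq_or_ne c 0 with rfl | hc
  · simp [mul_comm]
  rw [show b - a / c = (c * b - a) / c by field_simp] at h ⊢
  have h' : c * b - a ≠ 0 := by simpa [hc] using h
  field_simp

lemma inv_mul_sub_add_inv_mul_sub_div {K : Type*} [Field K] {b c l : K}
    (hb : b ≠ 0) (hc : c ≠ 0) (hl : l ≠ 0) (h : c - l * b ≠ 0) :
    (b * (c - l * b))⁻¹ + (c * (b - c / l))⁻¹ = (b * c)⁻¹ := by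
  have h' : c - b * l ≠ 0 := by rwa [mul_comm b]
  rw [show b - c / l = -(c - l * b) / l by field_simp; ring]
  field_simp
  ring

theorem eight_point_recursion_general (X13 X14 X15 X16 X25 X35 X36 X38 X58 X68 : ℝ)
    (h25 : X25 ≠ 0) (h35 : X35 ≠ 0) (h36 : X36 ≠ 0) (h38 : X38 ≠ 0)
    (hsp1 : X35 - X25 ≠ 0) (hsp2 : X35 - X38 ≠ 0) (hsp3 : X36 - 2 * X38 ≠ 0)
    (hsp4 : X35 - X36 / 2 ≠ 0) :
    (1 / X25 - 1 / X35) * (1 / (X15 * X68)) * (1 / X16 + 1 / X58) * (1 / (X35 - X25))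
      + (1 / X38 - 1 / X35) * (1 / (X13 * (X35 - X38) * X68))
          * (1 / X58 + 1 / (X36 - 2 * X38))
      + (1 / X36 - 1 / (2 * X35)) * (1 / ((X35 - X36 / 2) * X13 * X68))
          * (1 / (X38 - X36 / 2) + 1 / X16)
      + (1 / X14 + 1 / X35) * (1 / (X13 * X68 * X15)) * (1 / X58 + 1 / X16)
      = 1 / (X13 * X14 * X15 * X16 * X68) + 1 / (X13 * X15 * X16 * X35 * X68)
        + 1 / (X15 * X16 * X25 * X35 * X68) + 1 / (X13 * X16 * X35 * X36 * X68)
        + 1 / (X13 * X35 * X36 * X38 * X68) + 1 / (X13 * X14 * X15 * X58 * X68)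
        + 1 / (X13 * X15 * X35 * X58 * X68) + 1 / (X15 * X25 * X35 * X58 * X68)
        + 1 / (X13 * X35 * X38 * X58 * X68) := by
  have channel25 := inv_sub_inv_mul_inv_sub_div 1 h25 h35 (by simpa using hsp1)
  have channel38 := inv_sub_inv_mul_inv_sub_div 1 h38 h35 (by simpa using hsp2)
  have channel36 := inv_sub_inv_mul_inv_sub_div 2 h36 h35 hsp4
  have spurious := inv_mul_sub_add_inv_mul_sub_div h38 h36 two_ne_zero hsp3
  simp only [one_div, one_mul, div_one, mul_inv] at *
  linear_combination (X15 * X68)⁻¹ * (X16⁻¹ + X58⁻¹) * channel25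
    + (X13 * X68)⁻¹ * (X58⁻¹ + (X36 - 2 * X38)⁻¹) * channel38
    + (X13 * X68)⁻¹ * ((X38 - X36 / 2)⁻¹ + X16⁻¹) * channel36
    + (X35 * X13 * X68)⁻¹ * spurious

/-- Eight-point open-associahedron recursion identity for
`A₈[(1,2),(3,4),(5,(6,7),8)]`: the recursion with shift `X₃₅ → zX₃₅`, deformed
channels `F = {X₂₅, X₃₈, X₃₆, X₁₄}` and prefactors `λ = {1, 1, 2, −1}` reproduces
the nine flavor-allowed planar Feynman diagrams. -/
theorem eight_point_recursion (X13 X14 X15 X16 X25 X35 X36 X38 X58 X68 : ℝ)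
    (h13 : X13 ≠ 0) (h14 : X14 ≠ 0) (h15 : X15 ≠ 0) (h16 : X16 ≠ 0)
    (h25 : X25 ≠ 0) (h35 : X35 ≠ 0) (h36 : X36 ≠ 0) (h38 : X38 ≠ 0)
    (h58 : X58 ≠ 0) (h68 : X68 ≠ 0)
    (hsp1 : X35 - X25 ≠ 0) (hsp2 : X35 - X38 ≠ 0) (hsp3 : X36 - 2 * X38 ≠ 0)
    (hsp4 : X35 - X36 / 2 ≠ 0) (hsp5 : X38 - X36 / 2 ≠ 0) :
    (1 / X25 - 1 / X35) * (1 / (X15 * X68)) * (1 / X16 + 1 / X58) * (1 / (X35 - X25))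
      + (1 / X38 - 1 / X35) * (1 / (X13 * (X35 - X38) * X68))
          * (1 / X58 + 1 / (X36 - 2 * X38))
      + (1 / X36 - 1 / (2 * X35)) * (1 / ((X35 - X36 / 2) * X13 * X68))
          * (1 / (X38 - X36 / 2) + 1 / X16)
      + (1 / X14 + 1 / X35) * (1 / (X13 * X68 * X15)) * (1 / X58 + 1 / X16)
      = 1 / (X13 * X14 * X15 * X16 * X68) + 1 / (X13 * X15 * X16 * X35 * X68)
        + 1 / (X15 * X16 * X25 * X35 * X68) + 1 / (X13 * X16 * X35 * X36 * X68)
        + 1 / (X13 * X35 * X36 * X38 * X68) + 1 / (X13 * X14 * X15 * X58 * X68)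
        + 1 / (X13 * X15 * X35 * X58 * X68) + 1 / (X15 * X25 * X35 * X58 * X68)
        + 1 / (X13 * X35 * X38 * X58 * X68) :=
  eight_point_recursion_general X13 X14 X15 X16 X25 X35 X36 X38 X58 X68 h25 h35 h36 h38 hsp1 hsp2
    hsp3 hsp4
end
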